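/- Let f : I → ℝ³ be a unit speed timelike curve on S²₁ and h_u(v) = ⟪f(v), u⟫. For any v ∈ I and u ∈ ℝ³ with ⟪u,u⟫ = 1: h_u'(v) = 0 and h_u''(v) = 0 hold simultaneously if and only if u = ±(κ_g(v)f(v) − s(v))/√(κ_g(v)² + 1). -/

import Mathlib

noncomputable section

/-- Minkowski inner product ⟪x,y⟫ = x₁y₁ + x₂y₂ − x₃y₃ on ℝ³. -/
def mdot (x y : Fin 3 → ℝ) : ℝ := x 0 * y 0 + x 1 * y 1 - x 2 * y 2

/-- Lorentzian cross product x ×ₗ y. -/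
def lcross (x y : Fin 3 → ℝ) : Fin 3 → ℝ :=
  ![x 1 * y 2 - x 2 * y 1, x 2 * y 0 - x 0 * y 2, x 1 * y 0 - x 0 * y 1]

/-- Determinant of the 3×3 matrix with rows x, y, z. -/
def det3 (x y z : Fin 3 → ℝ) : ℝ :=
  x 0 * (y 1 * z 2 - y 2 * z 1) - x 1 * (y 0 * z 2 - y 2 * z 0) + x 2 * (y 0 * z 1 - y 1 * z 0)

/-- Minkowski norm ‖x‖ = √|⟪x,x⟫|. -/
def mnorm (x : Fin 3 → ℝ) : ℝ := Real.sqrt |mdot x x|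

private lemma mdot_comm (x y : Fin 3 → ℝ) : mdot x y = mdot y x := by
  unfold mdot; ring

private lemma mdot_lcross (x y z : Fin 3 → ℝ) : mdot z (lcross x y) = det3 x y z := by
  simp only [mdot, lcross, det3, Matrix.cons_val_zero, Matrix.cons_val_one, Matrix.head_cons,
    Matrix.cons_val_two, Matrix.tail_cons]
  ring

private lemma lagrange (x y : Fin 3 → ℝ) :
    mdot (lcross x y) (lcross x y) = (mdot x y) ^ 2 - mdot x x * mdot y y := by
  simp only [mdot, lcross, Matrix.cons_val_zero, Matrix.cons_val_one, Matrix.head_cons,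
    Matrix.cons_val_two, Matrix.tail_cons]
  ring

private lemma cramer3 (x y z w : Fin 3 → ℝ) (i : Fin 3) :
    w i * det3 x y z =
      mdot w x * lcross y z i + mdot w y * lcross z x i + mdot w z * lcross x y i := by
  fin_cases i <;> simp [mdot, lcross, det3] <;> ring

private lemma lcross_lcross (x y : Fin 3 → ℝ) (i : Fin 3) :
    lcross y (lcross x y) i = mdot x y * y i - mdot y y * x i := by
  fin_cases i <;> simp [mdot, lcross] <;> ring

private lemma mdot_smul_sub (c k : ℝ) (x y z : Fin 3 → ℝ) :
    mdot z (c • (k • x - y)) = c * (k * mdot z x - mdot z y) := by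
  simp only [mdot, Pi.smul_apply, Pi.sub_apply, smul_eq_mul]; ring

private lemma mdot_negr (x y : Fin 3 → ℝ) : mdot x (-y) = -(mdot x y) := by
  simp only [mdot, Pi.neg_apply]; ring

private lemma hasDerivAt_mdot {f g : ℝ → Fin 3 → ℝ} {f' g' : Fin 3 → ℝ} {x : ℝ}
    (hf : HasDerivAt f f' x) (hg : HasDerivAt g g' x) :
    HasDerivAt (fun w => mdot (f w) (g w)) (mdot f' (g x) + mdot (f x) g') x := by
  have h0 := hasDerivAt_pi.mp hf
  have h1 := hasDerivAt_pi.mp hg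
  have key : HasDerivAt (fun w => f w 0 * g w 0 + f w 1 * g w 1 - f w 2 * g w 2)
      ((f' 0 * g x 0 + f x 0 * g' 0) + (f' 1 * g x 1 + f x 1 * g' 1)
        - (f' 2 * g x 2 + f x 2 * g' 2)) x :=
    (((h0 0).mul (h1 0)).add ((h0 1).mul (h1 1))).sub ((h0 2).mul (h1 2))
  simp only [mdot]
  convert key using 1
  ring

/-- For a unit speed timelike curve f on S²₁ and u ∈ S²₁, h_u'(v) = h_u''(v) = 0 iff
u = ±(κ_g(v)f(v) − s(v))/√(κ_g(v)² + 1). -/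
theorem stmt_3 (a b : ℝ) (f : ℝ → Fin 3 → ℝ)
    (hf : ContDiffOn ℝ (⊤ : ℕ∞) f (Set.Ioo a b))
    (hsph : ∀ v ∈ Set.Ioo a b, mdot (f v) (f v) = 1)
    (htl : ∀ v ∈ Set.Ioo a b, mdot (deriv f v) (deriv f v) = -1)
    (t s : ℝ → Fin 3 → ℝ) (kg : ℝ → ℝ)
    (ht : t = fun w => deriv f w)
    (hs : s = fun w => lcross (f w) (t w))
    (hkg : kg = fun w => det3 (f w) (t w) (deriv t w))
    (u : Fin 3 → ℝ) (hu : mdot u u = 1)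
    (h : ℝ → ℝ) (hh : h = fun w => mdot (f w) u) :
    ∀ v ∈ Set.Ioo a b,
      ((deriv h v = 0 ∧ deriv (deriv h) v = 0) ↔
        (u = (Real.sqrt (kg v ^ 2 + 1))⁻¹ • (kg v • f v - s v) ∨
         u = -((Real.sqrt (kg v ^ 2 + 1))⁻¹ • (kg v • f v - s v)))) := by
  intro v hv
  have hopen : IsOpen (Set.Ioo a b) := isOpen_Ioo
  -- basic derivative facts
  have hd1 : ∀ w ∈ Set.Ioo a b, HasDerivAt f (deriv f w) w := fun w hw =>
    ((hf.differentiableOn (by simp)).differentiableAt (hopen.mem_nhds hw)).hasDerivAt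
  have hf' : ContDiffOn ℝ (⊤ : ℕ∞) (deriv f) (Set.Ioo a b) := hf.deriv_of_isOpen hopen (by simp)
  have hd2 : ∀ w ∈ Set.Ioo a b, HasDerivAt (deriv f) (deriv (deriv f) w) w := fun w hw =>
    ((hf'.differentiableOn (by simp)).differentiableAt (hopen.mem_nhds hw)).hasDerivAt
  -- first derivative of the height function
  have hD : ∀ w ∈ Set.Ioo a b,
      HasDerivAt (fun w => mdot (f w) u) (mdot (deriv f w) u) w := by
    intro w hw
    have := hasDerivAt_mdot (hd1 w hw) (hasDerivAt_const w u)
    simpa [mdot] using this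
  have dh1 : deriv (fun w => mdot (f w) u) v = mdot (deriv f v) u := (hD v hv).deriv
  -- second derivative of the height function
  have heq2 : (deriv fun w => mdot (f w) u) =ᶠ[nhds v] fun w => mdot (deriv f w) u := by
    filter_upwards [hopen.mem_nhds hv] with w hw using (hD w hw).deriv
  have hD2 : HasDerivAt (fun w => mdot (deriv f w) u) (mdot (deriv (deriv f) v) u) v := by
    have := hasDerivAt_mdot (hd2 v hv) (hasDerivAt_const v u)
    simpa [mdot] using this
  have dh2 : deriv (deriv fun w => mdot (f w) u) v = mdot (deriv (deriv f) v) u := by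
    rw [heq2.deriv_eq]; exact hD2.deriv
  -- geometric relations
  have hFT : ∀ w ∈ Set.Ioo a b, mdot (f w) (deriv f w) = 0 := by
    intro w hw
    have hg := hasDerivAt_mdot (hd1 w hw) (hd1 w hw)
    have hz : deriv (fun w => mdot (f w) (f w)) w = 0 := by
      have he : (fun w => mdot (f w) (f w)) =ᶠ[nhds w] fun _ => (1 : ℝ) := by
        filter_upwards [hopen.mem_nhds hw] with y hy using hsph y hy
      rw [he.deriv_eq]; exact deriv_const w 1
    have h2 : mdot (deriv f w) (f w) + mdot (f w) (deriv f w) = 0 := by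
      rw [← hg.deriv]; exact hz
    have hc := mdot_comm (deriv f w) (f w)
    linarith
  have hTT' : mdot (deriv f v) (deriv (deriv f) v) = 0 := by
    have hg := hasDerivAt_mdot (hd2 v hv) (hd2 v hv)
    have hz : deriv (fun w => mdot (deriv f w) (deriv f w)) v = 0 := by
      have he : (fun w => mdot (deriv f w) (deriv f w)) =ᶠ[nhds v] fun _ => (-1 : ℝ) := by
        filter_upwards [hopen.mem_nhds hv] with y hy using htl y hy
      rw [he.deriv_eq]; exact deriv_const v (-1)
    have h2 : mdot (deriv (deriv f) v) (deriv f v) + mdot (deriv f v) (deriv (deriv f) v) = 0 := by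
      rw [← hg.deriv]; exact hz
    have hc := mdot_comm (deriv (deriv f) v) (deriv f v)
    linarith
  have hFP : mdot (f v) (deriv (deriv f) v) = 1 := by
    have hg := hasDerivAt_mdot (hd1 v hv) (hd2 v hv)
    have hz : deriv (fun w => mdot (f w) (deriv f w)) v = 0 := by
      have he : (fun w => mdot (f w) (deriv f w)) =ᶠ[nhds v] fun _ => (0 : ℝ) := by
        filter_upwards [hopen.mem_nhds hv] with y hy using hFT y hy
      rw [he.deriv_eq]; exact deriv_const v 0
    have h2 : mdot (deriv f v) (deriv f v) + mdot (f v) (deriv (deriv f) v) = 0 := by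
      rw [← hg.deriv]; exact hz
    have hc := htl v hv
    linarith
  -- rewrite the goal
  simp only [hh, ht, hs, hkg]
  rw [dh1, dh2]
  -- abbreviations
  set F := f v with hFdef
  set T := deriv f v with hTdef
  set P := deriv (deriv f) v with hPdef
  set S := lcross F T with hSdef
  set K := det3 F T P with hKdef
  set r := Real.sqrt (K ^ 2 + 1) with hrdef
  have c1 : mdot F F = 1 := hsph v hv
  have c2 : mdot T T = -1 := htl v hv
  have c3 : mdot F T = 0 := hFT v hv
  have c4 : mdot F P = 1 := hFP
  have c5 : mdot T P = 0 := hTT'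
  have hSS : mdot S S = 1 := by
    rw [hSdef, lagrange, c3, c1, c2]; ring
  have hdetS : det3 F T S = 1 := by
    rw [← mdot_lcross, ← hSdef]; exact hSS
  have hPS : mdot P S = K := by
    rw [hSdef, mdot_lcross, ← hKdef]
  have hTS : mdot T S = 0 := by
    rw [hSdef, mdot_lcross]
    unfold det3; ring
  have hFS : mdot F S = 0 := by
    rw [hSdef, mdot_lcross]
    unfold det3; ring
  have hrpos : 0 < r := Real.sqrt_pos.mpr (by positivity)
  have hr2 : r ^ 2 = K ^ 2 + 1 := Real.sq_sqrt (by positivity)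
  constructor
  · rintro ⟨e1, e2⟩
    set α := mdot u F with hαdef
    set γ := mdot u S with hγdef
    have hmuT : mdot u T = 0 := by rw [mdot_comm]; exact e1
    have hexp : ∀ i, u i = α * F i + γ * S i := by
      intro i
      have hcr := cramer3 F T S u i
      rw [hdetS, hmuT] at hcr
      have hTxS : lcross T S i = F i := by
        rw [hSdef, lcross_lcross, c3, c2]; ring
      rw [hTxS] at hcr
      rw [← hαdef, ← hγdef] at hcr
      have hSi : lcross F T i = S i := by rw [hSdef]
      rw [hSi] at hcr
      linarith
    have hA : α + γ * K = 0 := by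
      have hcomp : mdot P u = α * mdot P F + γ * mdot P S := by
        simp only [mdot]
        rw [hexp 0, hexp 1, hexp 2]
        ring
      rw [mdot_comm P F, c4, hPS] at hcomp
      linarith [e2, hcomp]
    have hA2 : α * α + γ * γ = 1 := by
      have hcomp : mdot u u = α * α * mdot F F + 2 * (α * γ) * mdot F S + γ * γ * mdot S S := by
        simp only [mdot]
        rw [hexp 0, hexp 1, hexp 2]
        ring
      rw [c1, hFS, hSS] at hcomp
      linarith [hu, hcomp]
    have hγ2 : γ * γ * r ^ 2 = 1 := by
      rw [hr2]
      linear_combination (γ * K - α) * hA + hA2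
    have hgg : γ * γ = r⁻¹ * r⁻¹ := by
      have hrne : r ≠ 0 := ne_of_gt hrpos
      field_simp
      linear_combination hγ2
    have hfac : (γ - r⁻¹) * (γ + r⁻¹) = 0 := by linear_combination hgg
    rcases mul_eq_zero.mp hfac with hcase | hcase
    · right
      have hγv : γ = r⁻¹ := by linarith
      have hαv : α = -(r⁻¹ * K) := by rw [hγv] at hA; linarith
      funext i
      rw [Pi.neg_apply, Pi.smul_apply, Pi.sub_apply, Pi.smul_apply, smul_eq_mul, smul_eq_mul]
      rw [hexp i, hαv, hγv]
      ring
    · left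
      have hγv : γ = -r⁻¹ := by linarith
      have hαv : α = r⁻¹ * K := by rw [hγv] at hA; linarith
      funext i
      rw [Pi.smul_apply, Pi.sub_apply, Pi.smul_apply, smul_eq_mul, smul_eq_mul]
      rw [hexp i, hαv, hγv]
      ring
  · have key1 : K * mdot T F - mdot T S = 0 := by
      rw [mdot_comm T F, c3, hTS]; ring
    have key2 : K * mdot P F - mdot P S = 0 := by
      rw [mdot_comm P F, c4, hPS]; ring
    rintro (hcase | hcase) <;> rw [hcase] <;> constructor
    · rw [mdot_smul_sub, key1, mul_zero]
    · rw [mdot_smul_sub, key2, mul_zero]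
    · rw [mdot_negr, mdot_smul_sub, key1, mul_zero, neg_zero]
    · rw [mdot_negr, mdot_smul_sub, key2, mul_zero, neg_zero]
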